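/- Let b be a finite Blaschke product in E(φ), K = ker[T_φ^*, T_φ], and suppose T_φ(bK) ⊆ bH^2. Then T_φ(bk) = b·T_φ k for every k ∈ K. -/

import Mathlib

open MeasureTheory Complex Submodule
noncomputable section
instance fact2pi : Fact (0 < 2 * Real.pi) := ⟨by positivity⟩
instance factTop1 : Fact ((1:ENNReal) ≤ (⊤:ENNReal)) := ⟨le_top⟩
/-- the circle group -/
abbrev Tc := AddCircle (2 * Real.pi)
/-- normalized Haar measure on the circle -/
abbrev muh : Measure Tc := AddCircle.haarAddCircle
/-- L² of the circle -/
abbrev L2 := Lp ℂ 2 muh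
/-- L^∞ of the circle -/
abbrev Linf := Lp ℂ ⊤ muh

/-- The Hardy space `H²` as a closed subspace of `L²` of the circle. -/
def H2 : Submodule ℂ L2 :=
  (span ℂ (Set.range fun n : ℕ => (fourierLp 2 (n : ℤ) : L2))).topologicalClosure

theorem isClosed_H2 : IsClosed (H2 : Set L2) := Submodule.isClosed_topologicalClosure _
instance : CompleteSpace H2 := IsClosed.completeSpace_coe (hs := isClosed_H2)

theorem memLp2_mul (φ : Linf) (g : L2) :
    MemLp ((φ : Tc → ℂ) • (g : Tc → ℂ)) 2 muh :=
  MemLp.smul (Lp.memLp g) (Lp.memLp φ)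

/-- multiplication of an `L∞` function and an `L²` function, as an element of `L²`. -/
def mulL2 (φ : Linf) (g : L2) : L2 := (memLp2_mul φ g).toLp _

theorem mulL2_add (φ : Linf) (g h : L2) : mulL2 φ (g + h) = mulL2 φ g + mulL2 φ h := by
  simp only [mulL2]
  rw [← MemLp.toLp_add]
  apply MemLp.toLp_congr
  filter_upwards [Lp.coeFn_add g h] with x hx
  simp only [Pi.mul_apply, Pi.smul_apply, smul_eq_mul, hx, Pi.add_apply]
  ring

theorem mulL2_smul (φ : Linf) (c : ℂ) (g : L2) : mulL2 φ (c • g) = c • mulL2 φ g := by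
  simp only [mulL2]
  rw [← MemLp.toLp_const_smul]
  apply MemLp.toLp_congr
  filter_upwards [Lp.coeFn_smul c g] with x hx
  simp only [Pi.mul_apply, Pi.smul_apply, smul_eq_mul, hx]
  ring

theorem mulL2_norm (φ : Linf) (g : L2) : ‖mulL2 φ g‖ ≤ ‖φ‖ * ‖g‖ := by
  rw [mulL2, Lp.norm_toLp]
  have h : eLpNorm ((φ : Tc → ℂ) • (g : Tc → ℂ)) 2 muh ≤
      eLpNorm (φ : Tc → ℂ) ⊤ muh * eLpNorm (g : Tc → ℂ) 2 muh :=
    eLpNorm_smul_le_mul_eLpNorm (Lp.aestronglyMeasurable g) (Lp.aestronglyMeasurable φ)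
  calc (eLpNorm ((φ : Tc → ℂ) • (g : Tc → ℂ)) 2 muh).toReal
      ≤ (eLpNorm (φ : Tc → ℂ) ⊤ muh * eLpNorm (g : Tc → ℂ) 2 muh).toReal := by
        apply ENNReal.toReal_mono
        · exact ENNReal.mul_ne_top (Lp.eLpNorm_ne_top φ) (Lp.eLpNorm_ne_top g)
        · exact h
    _ = ‖φ‖ * ‖g‖ := by
        rw [ENNReal.toReal_mul, Lp.norm_def, Lp.norm_def]

/-- Multiplication by an `L^∞` function as a continuous linear operator on `L²`. -/
def Mmul (φ : Linf) : L2 →L[ℂ] L2 :=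
  LinearMap.mkContinuous
    { toFun := mulL2 φ
      map_add' := mulL2_add φ
      map_smul' := mulL2_smul φ } ‖φ‖ (mulL2_norm φ)

/-- the orthogonal projection `P : L² → H²`. -/
abbrev P2 : L2 →L[ℂ] ↥H2 := orthogonalProjection H2

/-- The Toeplitz operator with symbol `φ ∈ L^∞`, acting on `H²`: `T_φ g = P (φ g)`. -/
def Toep (φ : Linf) : ↥H2 →L[ℂ] ↥H2 := P2 ∘L (Mmul φ) ∘L H2.subtypeL

/-- The Toeplitz operator, viewed as a map `L² → L²` (useful to avoid coercions). -/
def TopL (φ : Linf) : L2 →L[ℂ] L2 := H2.subtypeL ∘L P2 ∘L Mmul φ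

theorem memLpTop_mul (φ ψ : Linf) : MemLp ((φ : Tc → ℂ) • (ψ : Tc → ℂ)) ⊤ muh :=
  MemLp.smul (Lp.memLp ψ) (Lp.memLp φ)

/-- `L^∞` is closed under products; we register this as a `Mul` instance. -/
instance : Mul Linf := ⟨fun φ ψ => (memLpTop_mul φ ψ).toLp _⟩

/-- the constant function `1` in `L^∞`. -/
instance : One Linf := ⟨(memLp_top_const (1 : ℂ)).toLp _⟩

/-- the embedding of `L^∞` into `L²` (the measure is finite). -/
def toL2 (φ : Linf) : L2 := ((Lp.memLp φ).mono_exponent le_top).toLp _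

/-- `H^∞`: the essentially bounded functions lying in the Hardy space. -/
def Hinf : Set Linf := {φ | toL2 φ ∈ H2}

/-- pointwise complex conjugation on `L²`. -/
def conjL2 (f : L2) : L2 :=
  ((Complex.conjCLE.toContinuousLinearMap).comp_memLp' (Lp.memLp f)).toLp _

/-- pointwise complex conjugation on `L^∞`. -/
def conjLinf (φ : Linf) : Linf :=
  ((Complex.conjCLE.toContinuousLinearMap).comp_memLp' (Lp.memLp φ)).toLp _

/-- composition with `z ↦ z⁻¹` (i.e. `x ↦ -x` on the additive circle) on `L²`. -/
def compNegL2 : L2 →ₗᵢ[ℂ] L2 :=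
  Lp.compMeasurePreservingₗᵢ ℂ (fun x : Tc => -x) (Measure.measurePreserving_neg muh)

/-- composition with `z ↦ z⁻¹` on `L^∞`. -/
def compNegLinf (φ : Linf) : Linf :=
  Lp.compMeasurePreserving (fun x : Tc => -x) (Measure.measurePreserving_neg muh) φ

/-- `φ̃(z) = conj (φ (z̄))`. -/
def tildeL (φ : Linf) : Linf := conjLinf (compNegLinf φ)

/-- `f̃(z) = conj (f (z̄))` on `L²`. -/
def tilde2 (f : L2) : L2 := conjL2 (compNegL2 f)

/-- the unitary `J` on `L²`: `(J f)(z) = z̄ f(z̄)`. -/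
def Jop : L2 →L[ℂ] L2 := (Mmul (fourierLp ⊤ (-1))) ∘L compNegL2.toContinuousLinearMap

/-- the projection onto `(H²)^⊥`. -/
def PperpL : L2 →L[ℂ] L2 := ContinuousLinearMap.id ℂ L2 - H2.subtypeL ∘L P2

/-- The Hankel operator with symbol `φ`: `H_φ g = J P^⊥ (φ g)`. -/
def Hank (φ : Linf) : ↥H2 →L[ℂ] L2 := Jop ∘L PperpL ∘L (Mmul φ) ∘L H2.subtypeL

/-- the self-commutator `[T^*, T] = T^*T - TT^*`. -/
def selfCommOp {H : Type*} [NormedAddCommGroup H] [InnerProductSpace ℂ H] [CompleteSpace H]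
    (T : H →L[ℂ] H) : H →L[ℂ] H :=
  ContinuousLinearMap.adjoint T ∘L T - T ∘L ContinuousLinearMap.adjoint T

/-- hyponormality of a Hilbert-space operator. -/
def IsHyponormalOp {H : Type*} [NormedAddCommGroup H] [InnerProductSpace ℂ H] [CompleteSpace H]
    (T : H →L[ℂ] H) : Prop := (selfCommOp T).IsPositive

/-- normality of a Hilbert-space operator. -/
def IsNormalOp {H : Type*} [NormedAddCommGroup H] [InnerProductSpace ℂ H] [CompleteSpace H]
    (T : H →L[ℂ] H) : Prop := selfCommOp T = 0

/-- finite rank operator. -/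
def FiniteRankOp {H : Type*} [NormedAddCommGroup H] [InnerProductSpace ℂ H]
    (T : H →L[ℂ] H) : Prop := FiniteDimensional ℂ ↥(LinearMap.range (T : H →ₗ[ℂ] H))

/-- `φ` is of bounded type: a quotient of two `H^∞` functions. -/
def BoundedType (φ : Linf) : Prop :=
  ∃ ψ₁ ψ₂ : Linf, ψ₁ ∈ Hinf ∧ ψ₂ ∈ Hinf ∧ (∀ᵐ x ∂muh, (ψ₂ : Tc → ℂ) x ≠ 0) ∧
    (∀ᵐ x ∂muh, (φ : Tc → ℂ) x = (ψ₁ : Tc → ℂ) x / (ψ₂ : Tc → ℂ) x)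

/-- scalar inner function. -/
def IsInner (θ : Linf) : Prop := θ ∈ Hinf ∧ ∀ᵐ x ∂muh, ‖(θ : Tc → ℂ) x‖ = 1

/-- constant function in `L^∞`. -/
def IsConstLinf (θ : Linf) : Prop := ∃ c : ℂ, θ = c • (1 : Linf)

/-- the boundary function `z = e^{ix}` on the circle. -/
def zfun : Tc → ℂ := fun x => fourier 1 x

/-- finite Blaschke product. -/
def IsFiniteBlaschke (θ : Linf) : Prop :=
  ∃ (c : ℂ) (N : ℕ) (α : Fin N → ℂ), ‖c‖ = 1 ∧ (∀ i, ‖α i‖ < 1) ∧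
    ∀ᵐ x ∂muh, (θ : Tc → ℂ) x =
      c * ∏ i, (zfun x - α i) / (1 - (starRingEnd ℂ (α i)) * zfun x)

/-- divisibility of inner functions: `θ` divides `θ'`. -/
def InnerDivides (θ θ' : Linf) : Prop := ∃ ω : Linf, IsInner ω ∧ θ' = θ * ω

/-- evaluation of an `H²` function inside the disk, via its Taylor (Fourier) coefficients. -/
def evalDisk (f : L2) (α : ℂ) : ℂ := ∑' k : ℕ, fourierCoeff (f : Tc → ℂ) (k : ℤ) * α ^ k

/-- the model space `H_θ = H² ⊖ θH²`. -/
def ModelSpace (θ : Linf) : Submodule ℂ L2 := H2 ⊓ (Submodule.map (Mmul θ : L2 →ₗ[ℂ] L2) H2)ᗮ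

/-- outer function: the closed span of its (analytic) polynomial multiples is all of `H²`. -/
def IsOuter (h : L2) : Prop :=
  (span ℂ (Set.range fun n : ℕ => mulL2 (fourierLp ⊤ (n : ℤ)) h)).topologicalClosure = H2

/-- `h` coincides with an `H^∞` function which is invertible in `H^∞`. -/
def InvertibleHinf (h : L2) : Prop :=
  ∃ u v : Linf, toL2 u = h ∧ u ∈ Hinf ∧ v ∈ Hinf ∧ u * v = 1

/-- the set `E(φ)` appearing in Cowen's hyponormality criterion. -/
def Ecal (φ : Linf) : Set Linf :=
  {k | k ∈ Hinf ∧ ‖k‖ ≤ 1 ∧ φ - k * conjLinf φ ∈ Hinf}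

theorem isClosed_modelSpace (θ : Linf) : IsClosed ((ModelSpace θ : Set L2)) := by
  rw [ModelSpace, Submodule.coe_inf]
  exact isClosed_H2.inter (Submodule.isClosed_orthogonal _)

instance (θ : Linf) : CompleteSpace (ModelSpace θ) :=
  IsClosed.completeSpace_coe (hs := isClosed_modelSpace θ)

/-- the orthogonal projection of `L²` onto the model space `H_θ`, as an endomorphism of `L²`. -/
def Pmodel (θ : Linf) : L2 →L[ℂ] L2 :=
  (ModelSpace θ).subtypeL ∘L orthogonalProjection (ModelSpace θ)

/-!
Since `|b| = 1` a.e. and `b ∈ H^∞`, multiplication by `b` preserves inner products and maps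
`H²` into itself. Hence for every `y ∈ L²` and `h ∈ H²`,
`⟪P(b y), b h⟫ = ⟪b y, b h⟫ = ⟪y, h⟫ = ⟪P y, h⟫ = ⟪b P y, b h⟫`, i.e. `P(b y) - b P y ⊥ bH²`.
For `y = φ k` the hypothesis puts `P(b y) = T_φ(b k)` in `bH²`, and `b P y = b T_φ k` lies there
too, so their difference is in `bH² ∩ (bH²)^⊥ = 0`.
-/

open ComplexConjugate InnerProductSpace

theorem coeFn_mulL2 (φ : Linf) (g : L2) :
    (mulL2 φ g : Tc → ℂ) =ᵐ[muh] (φ : Tc → ℂ) • (g : Tc → ℂ) :=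
  (memLp2_mul φ g).coeFn_toLp

theorem coeFn_toL2 (φ : Linf) : (toL2 φ : Tc → ℂ) =ᵐ[muh] (φ : Tc → ℂ) :=
  ((Lp.memLp φ).mono_exponent le_top).coeFn_toLp

@[simp]
theorem Mmul_apply (φ : Linf) (f : L2) : Mmul φ f = mulL2 φ f := rfl

theorem mulL2_comm (φ ψ : Linf) (f : L2) : mulL2 φ (mulL2 ψ f) = mulL2 ψ (mulL2 φ f) := by
  apply Lp.ext
  filter_upwards [coeFn_mulL2 φ (mulL2 ψ f), coeFn_mulL2 ψ f, coeFn_mulL2 ψ (mulL2 φ f),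
    coeFn_mulL2 φ f] with x h₁ h₂ h₃ h₄
  rw [h₁, h₃, Pi.smul_apply', Pi.smul_apply', h₂, h₄, Pi.smul_apply', Pi.smul_apply']
  exact mul_left_comm _ _ _

theorem mulL2_fourierLp_fourierLp (m n : ℤ) :
    mulL2 (fourierLp ⊤ m) (fourierLp 2 n) = fourierLp 2 (m + n) := by
  apply Lp.ext
  filter_upwards [coeFn_mulL2 (fourierLp ⊤ m) (fourierLp 2 n), coeFn_fourierLp ⊤ m,
    coeFn_fourierLp 2 n, coeFn_fourierLp 2 (m + n)] with x h₁ h₂ h₃ h₄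
  rw [h₁, h₄, Pi.smul_apply', h₂, h₃, smul_eq_mul, ← fourier_add]

theorem mulL2_fourierLp_eq_mulL2_toL2 (b : Linf) (n : ℤ) :
    mulL2 b (fourierLp 2 n) = mulL2 (fourierLp ⊤ n) (toL2 b) := by
  apply Lp.ext
  filter_upwards [coeFn_mulL2 b (fourierLp 2 n), coeFn_mulL2 (fourierLp ⊤ n) (toL2 b),
    coeFn_fourierLp 2 n, coeFn_fourierLp ⊤ n, coeFn_toL2 b] with x h₁ h₂ h₃ h₄ h₅
  rw [h₁, h₂, Pi.smul_apply', Pi.smul_apply', h₃, h₄, h₅, smul_eq_mul, smul_eq_mul, mul_comm]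

theorem fourierLp_mem_H2 (n : ℕ) : (fourierLp 2 (n : ℤ) : L2) ∈ H2 :=
  le_topologicalClosure _ (subset_span ⟨n, rfl⟩)

theorem H2_le_comap_of_forall_fourierLp_mem (T : L2 →L[ℂ] L2)
    (hT : ∀ n : ℕ, T (fourierLp 2 (n : ℤ)) ∈ H2) : H2 ≤ H2.comap (T : L2 →ₗ[ℂ] L2) :=
  topologicalClosure_minimal _ (span_le.mpr (Set.range_subset_iff.mpr hT))
    (isClosed_H2.preimage T.continuous)

theorem mulL2_fourierLp_mem_H2 (n : ℕ) {f : L2} (hf : f ∈ H2) :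
    mulL2 (fourierLp ⊤ (n : ℤ)) f ∈ H2 :=
  H2_le_comap_of_forall_fourierLp_mem (Mmul _) (fun k => by
    rw [Mmul_apply, mulL2_fourierLp_fourierLp, ← Nat.cast_add]
    exact fourierLp_mem_H2 (n + k)) hf

theorem mulL2_mem_H2 {b : Linf} (hb : b ∈ Hinf) {f : L2} (hf : f ∈ H2) : mulL2 b f ∈ H2 :=
  H2_le_comap_of_forall_fourierLp_mem (Mmul b) (fun n => by
    rw [Mmul_apply, mulL2_fourierLp_eq_mulL2_toL2]
    exact mulL2_fourierLp_mem_H2 n hb) hf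

theorem norm_sub_div_one_sub_conj_mul {z α : ℂ} (hz : ‖z‖ = 1) (hα : ‖α‖ ≠ 1) :
    ‖(z - α) / (1 - conj α * z)‖ = 1 := by
  have hzz : conj z * z = 1 := by
    rw [← normSq_eq_conj_mul_self, normSq_eq_norm_sq, hz]; norm_num
  have hden : 1 - conj α * z ≠ 0 := by
    intro h
    apply hα
    simpa [hz] using congrArg norm (sub_eq_zero.mp h).symm
  have hnum : ‖z - α‖ = ‖1 - conj α * z‖ :=
    calc ‖z - α‖ = ‖conj z * (z - α)‖ := by rw [norm_mul, RCLike.norm_conj, hz, one_mul]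
      _ = ‖conj (1 - conj α * z)‖ := by
        congr 1; simp only [map_sub, map_one, map_mul, conj_conj]; linear_combination hzz
      _ = ‖1 - conj α * z‖ := RCLike.norm_conj _
  rw [norm_div, hnum, div_self (norm_ne_zero_iff.mpr hden)]

theorem IsFiniteBlaschke.norm_eq_one_ae {b : Linf} (hb : IsFiniteBlaschke b) :
    ∀ᵐ x ∂muh, ‖(b : Tc → ℂ) x‖ = 1 := by
  obtain ⟨c, N, α, hc, hα, hb⟩ := hb
  filter_upwards [hb] with x hx
  rw [hx, norm_mul, hc, one_mul, norm_prod]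
  exact Finset.prod_eq_one fun i _ =>
    norm_sub_div_one_sub_conj_mul (Circle.norm_coe _) (hα i).ne

theorem inner_mulL2_mulL2 {b : Linf} (hb : ∀ᵐ x ∂muh, ‖(b : Tc → ℂ) x‖ = 1) (f g : L2) :
    ⟪mulL2 b f, mulL2 b g⟫_ℂ = ⟪f, g⟫_ℂ := by
  rw [L2.inner_def, L2.inner_def]
  refine integral_congr_ae ?_
  filter_upwards [coeFn_mulL2 b f, coeFn_mulL2 b g, hb] with x hf hg hbx
  rw [hf, hg, Pi.smul_apply', Pi.smul_apply', inner_smul_left, inner_smul_right, ← mul_assoc,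
    RCLike.conj_mul, hbx]
  simp

theorem Submodule.starProjection_apply_eq_of_mem_map {𝕜 E : Type*} [RCLike 𝕜]
    [NormedAddCommGroup E] [InnerProductSpace 𝕜 E] (K : Submodule 𝕜 E)
    [K.HasOrthogonalProjection] {U : E →ₗ[𝕜] E} (hU : ∀ f g, ⟪U f, U g⟫_𝕜 = ⟪f, g⟫_𝕜)
    (hUK : K.map U ≤ K) {y : E} (hy : K.starProjection (U y) ∈ K.map U) :
    K.starProjection (U y) = U (K.starProjection y) := by
  have inner_starProjection {u : E} (hu : u ∈ K) (v : E) :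
      ⟪u, K.starProjection v⟫_𝕜 = ⟪u, v⟫_𝕜 := by
    rw [← inner_starProjection_left_eq_right, K.starProjection_eq_self_iff.mpr hu]
  set d := K.starProjection (U y) - U (K.starProjection y)
  have hd_mem : d ∈ K.map U := sub_mem hy (mem_map_of_mem (K.starProjection_apply_mem y))
  have hd_orth : d ∈ (K.map U)ᗮ := by
    rintro _ ⟨h, hh, rfl⟩
    rw [inner_sub_right, inner_starProjection (hUK (mem_map_of_mem hh)), hU, hU,
      inner_starProjection hh, sub_self]
  exact sub_eq_zero.mp ((K.map U).inf_orthogonal_eq_bot.le ⟨hd_mem, hd_orth⟩)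

/-- if `b ∈ E(φ)` is a finite Blaschke product, `K = ker [T_φ*, T_φ]` and
`T_φ(bK) ⊆ bH²`, then `T_φ(bk) = b ⋅ T_φ k` for every `k ∈ K`. -/
theorem toeplitz_commutes_with_blaschke_on_kernel
    (φ b : Linf) (hb₁ : IsFiniteBlaschke b) (hb₂ : b ∈ Ecal φ)
    (hsub : ∀ x : ↥H2, selfCommOp (Toep φ) x = 0 →
      ∃ g : ↥H2, TopL φ (mulL2 b (x : L2)) = mulL2 b (g : L2)) :
    ∀ x : ↥H2, selfCommOp (Toep φ) x = 0 →
      TopL φ (mulL2 b (x : L2)) = mulL2 b ((Toep φ x : ↥H2) : L2) := by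
  intro x hx
  obtain ⟨g, hg⟩ := hsub x hx
  have hTop : TopL φ (mulL2 b x) = H2.starProjection (mulL2 b (mulL2 φ x)) :=
    congrArg H2.starProjection (mulL2_comm φ b x)
  rw [hTop] at hg ⊢
  exact H2.starProjection_apply_eq_of_mem_map (U := Mmul b)
    (inner_mulL2_mulL2 hb₁.norm_eq_one_ae)
    (map_le_iff_le_comap.mpr fun f hf => mulL2_mem_H2 hb₂.1 hf) (hg ▸ mem_map_of_mem g.2)
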